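/- arXiv:2012.03239 — 2 statements merged into one kernel-verified Lean document; each statement's English description precedes it below -/
import Mathlib

section
/- For every natural number n, the alternating binomial sum ∑_{k=1}^{n} (-1)^{k+1} · C(n,k)/k equals the n-th harmonic number H_n = ∑_{k=1}^{n} 1/k. Equivalently, as formal power series, e^z · Ein(z) = ∑_{p≥1} H_p z^p/p!, where Ein(z) = ∑_{k≥1} (-1)^{k+1} z^k/(k·k!). -/
/-!
Both sides grow by `1/(n+1)` when `n` increases by one. For the left side, Pascal's rule splits
`C(n+1,k)/k` into `C(n,k)/k + C(n,k-1)/k`, and `C(n,k-1)/k = C(n+1,k)/(n+1)`; the first parts sum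
to the left side at `n`, the second to `1/(n+1)` times the alternating sum
`∑_{k=1}^{n+1} (-1)^{k+1} C(n+1,k) = 1`.
-/

open Finset

theorem sum_Icc_neg_one_pow_succ_mul_choose {R : Type*} [Ring R] {n : ℕ} (hn : n ≠ 0) :
    ∑ k ∈ Icc 1 n, (-1 : R) ^ (k + 1) * n.choose k = 1 := by
  have h : ∑ k ∈ range (n + 1), (-1 : R) ^ k * n.choose k = 0 := by
    exact_mod_cast congrArg (Int.cast : ℤ → R) (Int.alternating_sum_range_choose_of_ne hn)
  rw [range_eq_Ico, sum_eq_sum_Ico_succ_bot (by omega), zero_add, Ico_add_one_right_eq_Icc] at h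
  replace h : ∑ k ∈ Icc 1 n, (-1 : R) ^ k * n.choose k = -1 := by
    simpa [add_eq_zero_iff_eq_neg'] using h
  simp only [pow_succ, mul_neg_one, neg_mul, sum_neg_distrib, h, neg_neg]

section

variable {K : Type*} [Field K] [CharZero K]

theorem choose_div_add_one_eq_choose_succ_div (n k : ℕ) :
    (n.choose k : K) / (k + 1) = (n + 1).choose (k + 1) / (n + 1) := by
  rw [div_eq_div_iff (Nat.cast_add_one_ne_zero k) (Nat.cast_add_one_ne_zero n)]
  exact_mod_cast (Nat.add_one_mul_choose_eq n k).symm.trans (mul_comm _ _) |>.symm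

theorem choose_succ_div_eq_add (n : ℕ) {k : ℕ} (hk : k ≠ 0) :
    ((n + 1).choose k : K) / k = n.choose k / k + (n + 1).choose k / (n + 1) := by
  obtain ⟨j, rfl⟩ := Nat.exists_eq_succ_of_ne_zero hk
  rw [Nat.cast_succ, ← choose_div_add_one_eq_choose_succ_div, Nat.choose_succ_succ', Nat.cast_add,
    add_div, add_comm]

variable (K) in
def alternatingChooseDivSum (n : ℕ) : K :=
  ∑ k ∈ Icc 1 n, (-1 : K) ^ (k + 1) * n.choose k / k

theorem alternatingChooseDivSum_succ (n : ℕ) :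
    alternatingChooseDivSum K (n + 1) = alternatingChooseDivSum K n + 1 / (n + 1) := by
  have hsplit : ∀ k ∈ Icc 1 (n + 1), (-1 : K) ^ (k + 1) * (n + 1).choose k / k =
      (-1 : K) ^ (k + 1) * n.choose k / k + (-1 : K) ^ (k + 1) * (n + 1).choose k / (n + 1) := by
    intro k hk
    simp only [mul_div_assoc, ← mul_add]
    rw [choose_succ_div_eq_add n (by grind)]
  unfold alternatingChooseDivSum
  rw [sum_congr rfl hsplit, sum_add_distrib, ← sum_div,
    sum_Icc_neg_one_pow_succ_mul_choose n.succ_ne_zero, sum_Icc_succ_top (by omega)]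
  simp [Nat.choose_succ_self]

theorem alternatingChooseDivSum_eq_sum_one_div (n : ℕ) :
    alternatingChooseDivSum K n = ∑ k ∈ Icc 1 n, (1 : K) / k := by
  induction n with
  | zero => rfl
  | succ n ih =>
    rw [alternatingChooseDivSum_succ, ih, sum_Icc_succ_top (by omega), Nat.cast_add_one]

end

/-- The alternating binomial sum `∑_{k=1}^n (-1)^{k+1} C(n,k)/k` equals the
`n`-th harmonic number `H_n = ∑_{k=1}^n 1/k`. -/
theorem alternating_binomial_harmonic (n : ℕ) :
    (∑ k ∈ Finset.Icc 1 n, (-1 : ℚ)^(k+1) * (Nat.choose n k : ℚ) / k)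
      = ∑ k ∈ Finset.Icc 1 n, (1 : ℚ) / k :=
  alternatingChooseDivSum_eq_sum_one_div n
end

section
/- Let u¹, u² be distinct complex numbers, U = diag(u¹,u²), V = [[0, i/2],[-i/2, 0]]. Define R₀ = I and for k ≥ 1, R_k = ((1/2)_{k-1}(1/2)_k / k!) · [[ (-1)^{k+1}/2, k·i ],[ (-1)^{k+1}·k·i, -1/2 ]] · (u²-u¹)^{-k}. Then for all k ≥ 0 the recursion [R_{k+1}, U] = (V + k·I)·R_k holds. -/
open Matrix

/-- The `R`-matrix coefficients of the Catalan Frobenius manifold: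
`R₀ = I` and, for `k ≥ 1`,
`R_k = ((1/2)_{k-1}(1/2)_k / k!) [[(-1)^{k+1}/2, k i],[(-1)^{k+1} k i, -1/2]] (u²-u¹)^{-k}`. -/
noncomputable def Rcat (u1 u2 : ℂ) : ℕ → Matrix (Fin 2) (Fin 2) ℂ
  | 0 => 1
  | (m+1) =>
      (((ascPochhammer ℂ m).eval (1/2) * (ascPochhammer ℂ (m+1)).eval (1/2)
          / (Nat.factorial (m+1) : ℂ)) * (u2 - u1)^(-(m+1 : ℤ))) •
        !![(-1 : ℂ)^(m+2)/2, (m+1 : ℂ) * Complex.I;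
           (-1 : ℂ)^(m+2) * (m+1 : ℂ) * Complex.I, -1/2]

/-!
Since `U = diag(u¹, u²)`, the commutator `[A, U]` kills the diagonal of `A` and multiplies its
off-diagonal entries by `±(u² - u¹)`. For `k = m + 1` both sides of the recursion are then
multiples of `[[0, 1], [(-1)^m, 0]]`: on the right the diagonal entries cancel because `i² = -1`
and the off-diagonal ones carry `(m+1)² - 1/4 = (m + 1/2)(m + 3/2)`. Comparing the scalars is
the Pochhammer step `(1/2)_{m+2} = (1/2)_{m+1} (m + 3/2)`.
-/

theorem smul_mul_sub_mul_smul {R A : Type*} [Monoid R] [Ring A] [DistribMulAction R A]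
    [IsScalarTower R A A] [SMulCommClass R A A] (c : R) (a b : A) :
    c • a * b - b * c • a = c • (a * b - b * a) := by
  rw [smul_mul_assoc, mul_smul_comm, smul_sub]

theorem Matrix.mul_diag_sub_diag_mul_fin_two {R : Type*} [CommRing R] (a b c e u1 u2 : R) :
    !![a, b; c, e] * !![u1, 0; 0, u2] - !![u1, 0; 0, u2] * !![a, b; c, e]
      = !![0, (u2 - u1) * b; -((u2 - u1) * c), 0] := by
  ext i j
  fin_cases i <;> fin_cases j <;> simp <;> ring

namespace Rcat

noncomputable def coeff (m : ℕ) : ℂ :=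
  (ascPochhammer ℂ m).eval (1/2) * (ascPochhammer ℂ (m+1)).eval (1/2) / (Nat.factorial (m+1) : ℂ)

noncomputable def shape (m : ℕ) : Matrix (Fin 2) (Fin 2) ℂ :=
  !![(-1 : ℂ)^(m+2)/2, (m+1 : ℂ) * Complex.I; (-1 : ℂ)^(m+2) * (m+1 : ℂ) * Complex.I, -1/2]

theorem succ_eq_smul_shape (u1 u2 : ℂ) (m : ℕ) :
    Rcat u1 u2 (m+1) = (coeff m * (u2 - u1)^(-(m+1 : ℤ))) • shape m := rfl

theorem coeff_zero : coeff 0 = 1/2 := by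
  simp [coeff]

theorem coeff_succ_mul (m : ℕ) :
    coeff (m+1) * (m+2) = coeff m * ((m + 1/2) * (m + 3/2)) := by
  have hfac : ((m+1).factorial : ℂ) ≠ 0 := mod_cast (m + 1).factorial_ne_zero
  have hm2 : (m : ℂ) + 1 + 1 ≠ 0 := by exact_mod_cast (m + 1).succ_ne_zero
  rw [coeff, coeff, ascPochhammer_succ_eval (m+1), ascPochhammer_succ_eval m,
    Nat.factorial_succ (m+1)]
  push_cast
  field_simp
  ring

theorem shape_succ_mul_diag_sub_diag_mul (u1 u2 : ℂ) (m : ℕ) :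
    shape (m+1) * !![u1, 0; 0, u2] - !![u1, 0; 0, u2] * shape (m+1)
      = ((u2 - u1) * (m+2) * Complex.I) • !![0, 1; (-1 : ℂ)^m, 0] := by
  rw [shape, Matrix.mul_diag_sub_diag_mul_fin_two]
  ext i j
  fin_cases i <;> fin_cases j <;> simp <;> ring

theorem V_add_smul_one_mul_shape (m : ℕ) :
    (!![0, Complex.I/2; -Complex.I/2, 0] + ((m + 1 : ℕ) : ℂ) • (1 : Matrix (Fin 2) (Fin 2) ℂ))
        * shape m
      = ((m + 1/2) * (m + 3/2) * Complex.I) • !![0, 1; (-1 : ℂ)^m, 0] := by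
  ext i j
  fin_cases i <;> fin_cases j <;> simp [shape, Matrix.mul_apply]
  · linear_combination (-1 : ℂ) ^ m * (m + 1) / 2 * Complex.I_sq
  · ring
  · ring
  · linear_combination -(m + 1 : ℂ) / 2 * Complex.I_sq

end Rcat

/-- The explicit matrices `R_k` satisfy the recursion `[R_{k+1}, U] = (V + k)R_k`:
the base case `[R₁,U] = V R₀` and, for all `k ≥ 1`,
`[R_{k+1},U] = (V + k·I) R_k`. -/
theorem R_matrix_recursion (u1 u2 : ℂ) (h : u1 ≠ u2) :
    let U : Matrix (Fin 2) (Fin 2) ℂ := !![u1, 0; 0, u2]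
    let V : Matrix (Fin 2) (Fin 2) ℂ := !![0, Complex.I/2; -Complex.I/2, 0]
    (Rcat u1 u2 1 * U - U * Rcat u1 u2 1 = V * Rcat u1 u2 0) ∧
    (∀ k : ℕ, 1 ≤ k →
      Rcat u1 u2 (k+1) * U - U * Rcat u1 u2 (k+1)
        = (V + (k : ℂ) • (1 : Matrix (Fin 2) (Fin 2) ℂ)) * Rcat u1 u2 k) := by
  intro U V
  have hd : u2 - u1 ≠ 0 := sub_ne_zero.mpr h.symm
  constructor
  · show Rcat u1 u2 (0+1) * U - U * Rcat u1 u2 (0+1) = V * 1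
    rw [Rcat.succ_eq_smul_shape, smul_mul_sub_mul_smul, Rcat.shape,
      Matrix.mul_diag_sub_diag_mul_fin_two, Rcat.coeff_zero, mul_one]
    ext i j
    fin_cases i <;> fin_cases j <;> simp [V] <;> field_simp
  · intro k hk
    obtain ⟨m, rfl⟩ := Nat.exists_eq_add_of_le' hk
    rw [Rcat.succ_eq_smul_shape, Rcat.succ_eq_smul_shape, smul_mul_sub_mul_smul,
      Rcat.shape_succ_mul_diag_sub_diag_mul, mul_smul_comm, Rcat.V_add_smul_one_mul_shape,
      smul_smul, smul_smul]
    congr 1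
    have hpow : (u2 - u1) ^ (-(((m + 1 : ℕ) : ℤ) + 1)) * (u2 - u1)
        = (u2 - u1) ^ (-((m : ℤ) + 1)) := by
      rw [← zpow_add_one₀ hd]; push_cast; ring_nf
    linear_combination
      ((u2 - u1) ^ (-(((m + 1 : ℕ) : ℤ) + 1)) * (u2 - u1) * Complex.I) * Rcat.coeff_succ_mul m
        + (Rcat.coeff m * ((m + 1/2) * (m + 3/2)) * Complex.I) * hpow
end
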